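/- The function f is convex on the interval [0, 2): for all V₁, V₂ ∈ [0, 2) and all t ∈ [0, 1], f(t·V₁ + (1−t)·V₂) ≤ t·f(V₁) + (1−t)·f(V₂). -/

import Mathlib

open Real

/-- First branch of Gupta et al.'s helper function `f`. -/
noncomputable def g1 (V : ℝ) : ℝ := Real.log ((2 + V) / (2 - V)) - 2 * V / (2 + V)

/-- Gupta et al.'s helper function `f`. -/
noncomputable def f (V : ℝ) : ℝ := max (g1 V) (V ^ 2 / 2 + V ^ 4 / 36 + V ^ 6 / 288)

/-! On all of `(-2, 2)`, `g1' = 8x / ((2 - x)(2 + x)²)` and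
`g1'' = 16 (x² - x + 2) / ((2 - x)² (2 + x)³) > 0`, so `g1` is convex; the polynomial branch is a
nonnegative combination of even powers, and a maximum of convex functions is convex. -/

open Set

lemma hasDerivAt_g1 {x : ℝ} (hx : x ∈ Ioo (-2) 2) :
    HasDerivAt g1 (8 * x / ((2 - x) * (2 + x) ^ 2)) x := by
  have hp : 0 < 2 + x := by linarith [hx.1]
  have hm : 0 < 2 - x := by linarith [hx.2]
  have hquot := ((hasDerivAt_id' x).const_add 2).div ((hasDerivAt_id' x).const_sub 2) hm.ne'
  have hfrac := ((hasDerivAt_id' x).const_mul 2).div ((hasDerivAt_id' x).const_add 2) hp.ne'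
  refine ((hquot.log (div_pos hp hm).ne').sub hfrac).congr_deriv ?_
  simp only [Pi.div_apply]
  field_simp
  ring

lemma hasDerivAt_deriv_g1 {x : ℝ} (hx : x ∈ Ioo (-2) 2) :
    HasDerivAt (fun x : ℝ ↦ 8 * x / ((2 - x) * (2 + x) ^ 2))
      (16 * (x ^ 2 - x + 2) / ((2 - x) ^ 2 * (2 + x) ^ 3)) x := by
  have hp : 0 < 2 + x := by linarith [hx.1]
  have hm : 0 < 2 - x := by linarith [hx.2]
  have hden := ((hasDerivAt_id' x).const_sub 2).mul (((hasDerivAt_id' x).const_add 2).pow 2)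
  refine (((hasDerivAt_id' x).const_mul 8).div hden
    (mul_pos hm (pow_pos hp 2)).ne').congr_deriv ?_
  simp only [Pi.mul_apply, Pi.pow_apply]
  field_simp
  ring

lemma convexOn_g1 : ConvexOn ℝ (Ioo (-2) 2) g1 := by
  refine convexOn_of_hasDerivWithinAt2_nonneg (convex_Ioo _ _)
    (f' := fun x ↦ 8 * x / ((2 - x) * (2 + x) ^ 2))
    (f'' := fun x ↦ 16 * (x ^ 2 - x + 2) / ((2 - x) ^ 2 * (2 + x) ^ 3))
    (fun x hx ↦ (hasDerivAt_g1 hx).continuousAt.continuousWithinAt) ?_ ?_ ?_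
  · intro x hx
    rw [interior_Ioo] at hx ⊢
    exact (hasDerivAt_g1 hx).hasDerivWithinAt
  · intro x hx
    rw [interior_Ioo] at hx ⊢
    exact (hasDerivAt_deriv_g1 hx).hasDerivWithinAt
  · intro x hx
    rw [interior_Ioo] at hx
    have hp : 0 < 2 + x := by linarith [hx.1]
    have hm : 0 < 2 - x := by linarith [hx.2]
    have hnum : 0 < x ^ 2 - x + 2 := by nlinarith [sq_nonneg (x - 1 / 2)]
    positivity

lemma convexOn_univ_poly :
    ConvexOn ℝ univ (fun V : ℝ ↦ V ^ 2 / 2 + V ^ 4 / 36 + V ^ 6 / 288) := by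
  have h2 : ConvexOn ℝ univ fun x : ℝ ↦ x ^ 2 := Even.convexOn_pow ⟨1, rfl⟩
  have h4 : ConvexOn ℝ univ fun x : ℝ ↦ x ^ 4 := Even.convexOn_pow ⟨2, rfl⟩
  have h6 : ConvexOn ℝ univ fun x : ℝ ↦ x ^ 6 := Even.convexOn_pow ⟨3, rfl⟩
  refine (((h2.smul (by norm_num : (0 : ℝ) ≤ 1 / 2)).add
    (h4.smul (by norm_num : (0 : ℝ) ≤ 1 / 36))).add
    (h6.smul (by norm_num : (0 : ℝ) ≤ 1 / 288))).congr fun x _ ↦ ?_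
  simp only [Pi.add_apply, smul_eq_mul]
  ring

lemma convexOn_f : ConvexOn ℝ (Ioo (-2) 2) f :=
  convexOn_g1.sup (convexOn_univ_poly.subset (subset_univ _) (convex_Ioo _ _))

/-- `f` is convex on `[0, 2)`. -/
theorem f_convexOn :
    ∀ V₁ V₂ : ℝ, 0 ≤ V₁ → V₁ < 2 → 0 ≤ V₂ → V₂ < 2 →
      ∀ t : ℝ, 0 ≤ t → t ≤ 1 →
        f (t * V₁ + (1 - t) * V₂) ≤ t * f V₁ + (1 - t) * f V₂ := by
  intro V₁ V₂ h₁ h₁' h₂ h₂' t ht ht'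
  exact convexOn_f.2 ⟨by linarith, h₁'⟩ ⟨by linarith, h₂'⟩ ht (by linarith) (by ring)
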